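/- The four-element join-semilattice with bottom elements a, b, c pairwise incomparable and top element 1 = a∨b = a∨c = b∨c is B-distributive (indeed S_n-distributive for all n) but not H-distributive. -/

import Mathlib

/-!
Every element other than `one` is minimal, so a greatest lower bound of a nonempty set is
one of its members and hence the least element of the set; joining with `x` is monotone, so
`x ⊔ m` is then the least element of the image. H-distributivity fails at `h = c`, `u = a`,
`v = b`, `w = a`: the minimal element `c` lies below `a ⊔ b` but below neither `a` nor `b`.
-/

def IsHDistributive (J : Type*) [SemilatticeSup J] : Prop :=
  ∀ h u v w : J, (∀ y : J, y ≤ h → y ≤ u → y ≤ w) →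
    (∀ y : J, y ≤ h → y ≤ v → y ≤ w) →
    ∀ y : J, y ≤ h → y ≤ u ⊔ v → y ≤ w

theorem IsGLB.mem_of_forall_isMin_or_eq {α : Type*} [PartialOrder α] {s : Set α} {m t : α}
    (hmin : ∀ x, IsMin x ∨ x = t) (hs : s.Nonempty) (hm : IsGLB s m) : m ∈ s := by
  by_cases hsm : ∃ y ∈ s, IsMin y
  · obtain ⟨y, hy, hy_min⟩ := hsm
    exact hy_min.eq_of_ge (hm.1 hy) ▸ hy
  · push Not at hsm
    have hst : s = {t} :=
      hs.subset_singleton_iff.1 fun y hy => (hmin y).resolve_left (hsm y hy)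
    subst hst
    exact hm.unique isGLB_singleton

theorem IsGLB.image_sup_of_mem {α : Type*} [SemilatticeSup α] {s : Set α} {m : α}
    (hm : IsGLB s m) (hms : m ∈ s) (x : α) : IsGLB ((fun y => x ⊔ y) '' s) (x ⊔ m) :=
  (Monotone.map_isLeast (fun _ _ h => sup_le_sup_left h x) ⟨hms, hm.1⟩).isGLB

theorem not_isHDistributive_of_isMin {J : Type*} [SemilatticeSup J] {h u v : J}
    (hh : IsMin h) (hhu : ¬ h ≤ u) (hhv : ¬ h ≤ v) (hle : h ≤ u ⊔ v) :
    ¬ IsHDistributive J := fun hJ =>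
  hhu <| hJ h u v u (fun _ _ hy => hy)
    (fun _ hyh hyv => absurd (hh.eq_of_ge hyh ▸ hyv) hhv) h le_rfl hle

theorem stmt_15_general {J : Type*} [SemilatticeSup J] (a b c one : J)
    (hab : ¬ a ≤ b) (hba : ¬ b ≤ a) (hac : ¬ a ≤ c) (hca : ¬ c ≤ a)
    (hbc : ¬ b ≤ c) (hcb : ¬ c ≤ b)
    (h1 : a ⊔ b = one) (h3 : b ⊔ c = one)
    (hcard : ∀ x : J, x = a ∨ x = b ∨ x = c ∨ x = one) :
    (∀ (s : Finset J) (x m : J), s.Nonempty → IsGLB (s : Set J) m →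
        IsGLB ((fun y => x ⊔ y) '' (s : Set J)) (x ⊔ m)) ∧
    ¬ (∀ h u v w : J, (∀ y : J, y ≤ h → y ≤ u → y ≤ w) →
        (∀ y : J, y ≤ h → y ≤ v → y ≤ w) →
        ∀ y : J, y ≤ h → y ≤ u ⊔ v → y ≤ w) := by
  have ha : a ≤ one := h1 ▸ le_sup_left
  have hb : b ≤ one := h1 ▸ le_sup_right
  have hc : c ≤ one := h3 ▸ le_sup_right
  have hmin : ∀ x, IsMin x ∨ x = one := by
    refine fun x => (eq_or_ne x one).symm.imp_left fun hx y hy => ?_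
    rcases hcard x with rfl | rfl | rfl | rfl <;> rcases hcard y with rfl | rfl | rfl | rfl <;>
      grind
  exact ⟨fun s x m hs hm => hm.image_sup_of_mem (hm.mem_of_forall_isMin_or_eq hmin hs) x,
    not_isHDistributive_of_isMin ((hmin c).resolve_right fun hc1 => hac (hc1 ▸ ha)) hca hcb
      (h1 ▸ hc)⟩

/-- The four-element join-semilattice with pairwise incomparable bottoms a, b, c
and top 1 = a ⊔ b = a ⊔ c = b ⊔ c is B-distributive (indeed Sₙ-distributive for
all n) but not H-distributive. -/
theorem stmt_15 {J : Type*} [SemilatticeSup J] (a b c one : J)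
    (hab : ¬ a ≤ b) (hba : ¬ b ≤ a) (hac : ¬ a ≤ c) (hca : ¬ c ≤ a)
    (hbc : ¬ b ≤ c) (hcb : ¬ c ≤ b)
    (h1 : a ⊔ b = one) (h2 : a ⊔ c = one) (h3 : b ⊔ c = one)
    (hcard : ∀ x : J, x = a ∨ x = b ∨ x = c ∨ x = one) :
    (∀ (s : Finset J) (x m : J), s.Nonempty → IsGLB (s : Set J) m →
        IsGLB ((fun y => x ⊔ y) '' (s : Set J)) (x ⊔ m)) ∧
    ¬ (∀ h u v w : J, (∀ y : J, y ≤ h → y ≤ u → y ≤ w) →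
        (∀ y : J, y ≤ h → y ≤ v → y ≤ w) →
        ∀ y : J, y ≤ h → y ≤ u ⊔ v → y ≤ w) :=
  stmt_15_general a b c one hab hba hac hca hbc hcb h1 h3 hcard
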